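/- In the setting of the dimension embedding reduction, let S be a solution of I(Π,F), let T = {ℓ ∈ [r] : Σ_{(v,σ)∈S} J(ℓ,v) = N_ℓ}, for j ∈ D let ℓ(j) denote the unique index with j ∈ D_{ℓ(j)}, let V* = {v ∈ V(G) : ℓ(x) ∈ T for every x ∈ Adj_G(v) ∪ {v}}, and for v ∈ V* let σ_v be the unique symbol with (v, σ_v) ∈ S. Then the partial assignment φ defined by φ(v) = σ_v for v ∈ V* and φ(v) = ⊥ otherwise is a consistent partial assignment for Π. -/

import Mathlib

/-- An R-CSP instance: a finite simple directed graph (irreflexive and antisymmetric edge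
set `E ⊆ V × V`), an alphabet `S`, a value alphabet `Υ = {1,…,m}` with `m > 0`, and for
each edge `e = (u,v) ∈ E` two maps `π_{e,u}, π_{e,v} : S → {1,…,m}` (called `pifst e` and
`pisnd e` respectively). -/
structure RCSP (V S : Type) [Fintype V] [DecidableEq V] [Fintype S] [DecidableEq S] where
  E : Finset (V × V)
  ne_of_mem : ∀ e ∈ E, e.1 ≠ e.2
  antisymm : ∀ u v : V, (u, v) ∈ E → (v, u) ∉ E
  m : ℕ
  m_pos : 0 < m
  pifst : V × V → S → ℕ
  pisnd : V × V → S → ℕ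
  pifst_pos : ∀ e ∈ E, ∀ σ : S, 1 ≤ pifst e σ
  pifst_le : ∀ e ∈ E, ∀ σ : S, pifst e σ ≤ m
  pisnd_pos : ∀ e ∈ E, ∀ σ : S, 1 ≤ pisnd e σ
  pisnd_le : ∀ e ∈ E, ∀ σ : S, pisnd e σ ≤ m

namespace RCSP

variable {V S : Type} [Fintype V] [DecidableEq V] [Fintype S] [DecidableEq S]

/-- A partial assignment `φ : V → S ∪ {⊥}` is consistent if for every edge `e = (u,v)`
with both endpoints assigned, `π_{e,u}(φ u) = π_{e,v}(φ v)`. -/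
def Consistent (P : RCSP V S) (φ : V → Option S) : Prop :=
  ∀ e ∈ P.E, ∀ a b : S, φ e.1 = some a → φ e.2 = some b → P.pifst e a = P.pisnd e b

/-- The size of a partial assignment: the number of vertices assigned a value. -/
def size (φ : V → Option S) : ℕ := (Finset.univ.filter fun v : V => (φ v).isSome).card

/-- The set `Adj_G(v)` of edges incident to the vertex `v`. -/
def adj (P : RCSP V S) (v : V) : Finset (V × V) :=
  P.E.filter fun e => e.1 = v ∨ e.2 = v

/-- The set of constraints `D = V(G) ∪ E(G)`, as a finset of `V ⊕ (V × V)`. -/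
def Dset (P : RCSP V S) : Finset (V ⊕ (V × V)) :=
  Finset.univ.image Sum.inl ∪ P.E.image Sum.inr

/-- The block `D_ℓ` of the partition of `D` determined by the index function `idx`
(assigning to each constraint the index of its block). -/
def Dblock (P : RCSP V S) {r : ℕ} (idx : V ⊕ (V × V) → Fin r) (ℓ : Fin r) :
    Finset (V ⊕ (V × V)) :=
  P.Dset.filter fun j => idx j = ℓ

/-- `J(ℓ,v)`: the number of constraints in `D_ℓ` in which `v` participates, namely
`|Adj_G(v) ∩ D_ℓ|`, plus one if `v ∈ D_ℓ`. -/
def J (P : RCSP V S) {r : ℕ} (idx : V ⊕ (V × V) → Fin r) (ℓ : Fin r) (v : V) : ℕ :=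
  ((P.adj v).filter fun e => idx (Sum.inr e) = ℓ).card +
    if idx (Sum.inl v) = ℓ then 1 else 0

/-- `N_ℓ = Σ_{v ∈ V(G)} J(ℓ,v)`. -/
def N (P : RCSP V S) {r : ℕ} (idx : V ⊕ (V × V) → Fin r) (ℓ : Fin r) : ℕ :=
  ∑ v : V, P.J idx ℓ v

/-- The profit of a set of items: `p(v,σ) = Σ_{ℓ ∈ [r]} J(ℓ,v)`, summed over the set. -/
def profit (P : RCSP V S) {r : ℕ} (idx : V ⊕ (V × V) → Fin r)
    (Sol : Finset (V × S)) : ℕ :=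
  ∑ i ∈ Sol, ∑ ℓ : Fin r, P.J idx ℓ i.1

/-- `Q = 3 · F² · m · |V(G)| · |Σ|`. -/
def Q (P : RCSP V S) (F : ℕ) : ℕ :=
  3 * F ^ 2 * P.m * Fintype.card V * Fintype.card S

/-- `M = Q^{2F}`. -/
def Mbig (P : RCSP V S) (F : ℕ) : ℕ := P.Q F ^ (2 * F)

/-- The auxiliary weights `w_j(v,σ)` for constraints `j ∈ D`:
`w_v(v,σ) = m`; for an edge `e ∈ E`, `w_e(v,σ) = π_{e,v}(σ)` if `v` is the first endpoint
of `e`, and `w_e(v,σ) = m − π_{e,v}(σ)` if `v` is the second endpoint; all other weights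
vanish. -/
def ew (P : RCSP V S) : V ⊕ (V × V) → V × S → ℕ
  | Sum.inl u, (v, _) => if v = u then P.m else 0
  | Sum.inr e, (v, σ) =>
      if e ∈ P.E then
        if e.1 = v then P.pifst e σ else if e.2 = v then P.m - P.pisnd e σ else 0
      else 0

/-- The cost in dimension `(ℓ,1)`: `c_{(ℓ,1)}(i) = Σ_{j ∈ D_ℓ} w_j(i) · Q^{ord_ℓ(j)}`. -/
def cost1 (P : RCSP V S) (F : ℕ) {r : ℕ} (idx : V ⊕ (V × V) → Fin r)
    (ord : V ⊕ (V × V) → ℕ) (ℓ : Fin r) (i : V × S) : ℕ :=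
  ∑ j ∈ P.Dblock idx ℓ, P.ew j i * P.Q F ^ ord j

/-- The cost in dimension `(ℓ,2)`: `c_{(ℓ,2)}(v,σ) = M · J(ℓ,v) − c_{(ℓ,1)}(v,σ)`. -/
def cost2 (P : RCSP V S) (F : ℕ) {r : ℕ} (idx : V ⊕ (V × V) → Fin r)
    (ord : V ⊕ (V × V) → ℕ) (ℓ : Fin r) (i : V × S) : ℕ :=
  P.Mbig F * P.J idx ℓ i.1 - P.cost1 F idx ord ℓ i

/-- The budget in dimension `(ℓ,1)`: `B_{(ℓ,1)} = Σ_{j ∈ D_ℓ} m · Q^{ord_ℓ(j)}`. -/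
def budget1 (P : RCSP V S) (F : ℕ) {r : ℕ} (idx : V ⊕ (V × V) → Fin r)
    (ord : V ⊕ (V × V) → ℕ) (ℓ : Fin r) : ℕ :=
  ∑ j ∈ P.Dblock idx ℓ, P.m * P.Q F ^ ord j

/-- The budget in dimension `(ℓ,2)`: `B_{(ℓ,2)} = M · N_ℓ − B_{(ℓ,1)}`. -/
def budget2 (P : RCSP V S) (F : ℕ) {r : ℕ} (idx : V ⊕ (V × V) → Fin r)
    (ord : V ⊕ (V × V) → ℕ) (ℓ : Fin r) : ℕ :=
  P.Mbig F * P.N idx ℓ - P.budget1 F idx ord ℓ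

/-- A solution of the knapsack instance `I(Π,F)` produced by the dimension embedding
reduction: a set of items respecting the budgets in all `2r` dimensions. -/
def IsEmbedSolution (P : RCSP V S) (F : ℕ) {r : ℕ} (idx : V ⊕ (V × V) → Fin r)
    (ord : V ⊕ (V × V) → ℕ) (Sol : Finset (V × S)) : Prop :=
  (∀ ℓ : Fin r, ∑ i ∈ Sol, P.cost1 F idx ord ℓ i ≤ P.budget1 F idx ord ℓ) ∧
  (∀ ℓ : Fin r, ∑ i ∈ Sol, P.cost2 F idx ord ℓ i ≤ P.budget2 F idx ord ℓ)

/-- The index `ℓ ∈ [r]` is tight for `Sol` if `Σ_{(v,σ) ∈ Sol} J(ℓ,v) = N_ℓ`. -/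
def Tight (P : RCSP V S) {r : ℕ} (idx : V ⊕ (V × V) → Fin r)
    (Sol : Finset (V × S)) (ℓ : Fin r) : Prop :=
  ∑ i ∈ Sol, P.J idx ℓ i.1 = P.N idx ℓ

/-- `v ∈ V*`: every constraint `x ∈ Adj_G(v) ∪ {v}` lies in a tight block, i.e.
`ℓ(x) ∈ T` where `ℓ(x)` is the index of the block containing `x`. -/
def InVstar (P : RCSP V S) {r : ℕ} (idx : V ⊕ (V × V) → Fin r)
    (Sol : Finset (V × S)) (v : V) : Prop :=
  P.Tight idx Sol (idx (Sum.inl v)) ∧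
    ∀ e ∈ P.adj v, P.Tight idx Sol (idx (Sum.inr e))

/-- The hypotheses of the dimension embedding reduction: the constraint graph is
3-regular, `F ∈ [|V(G)|]`, the blocks `D_1,…,D_r` partition `D` (automatic, since `idx`
is a function on `D`) with `|D_ℓ| ≤ F`, and for each `ℓ` the map `ord` restricts to a
bijection `D_ℓ → {1,…,|D_ℓ|}`. -/
def EmbedSetting (P : RCSP V S) (F : ℕ) {r : ℕ} (idx : V ⊕ (V × V) → Fin r)
    (ord : V ⊕ (V × V) → ℕ) : Prop :=
  (∀ v : V, (P.adj v).card = 3) ∧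
  1 ≤ F ∧ F ≤ Fintype.card V ∧
  (∀ ℓ : Fin r, (P.Dblock idx ℓ).card ≤ F) ∧
  (∀ ℓ : Fin r, Set.BijOn ord (P.Dblock idx ℓ : Set (V ⊕ (V × V)))
    (Set.Icc 1 ((P.Dblock idx ℓ).card)))

end RCSP


/-!
On a tight block `D_ℓ` the items of `Sol` have total `(ℓ,1)`- plus `(ℓ,2)`-cost exactly
`M · N_ℓ = B_{(ℓ,1)} + B_{(ℓ,2)}` (the truncated subtractions are exact because
`c_{(ℓ,1)}(v,σ) ≤ M · J(ℓ,v)` and `B_{(ℓ,1)} ≤ M · N_ℓ`), so the budget `B_{(ℓ,1)}` is attained.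
Every coefficient `Σ_{i ∈ Sol} w_j(i)` is below `Q` and `ord_ℓ` is injective, so comparing
base-`Q` digits gives `Σ_{i ∈ Sol} w_j(i) = m` for every `j ∈ D_ℓ`. For `j = v ∈ V*` this says
that `Sol` contains exactly one item `(v, σ_v)`; for an edge `e = (u, v)` with both ends in `V*`
it reads `π_{e,u}(σ_u) + m - π_{e,v}(σ_v) = m`.
-/

open Finset

theorem Nat.eq_of_sum_mul_pow_eq {ι : Type*} [DecidableEq ι] {s : Finset ι} {e : ι → ℕ}
    (he : Set.InjOn e s) {Q : ℕ} {a b : ι → ℕ} (ha : ∀ j ∈ s, a j < Q)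
    (hb : ∀ j ∈ s, b j < Q) (h : ∑ j ∈ s, a j * Q ^ e j = ∑ j ∈ s, b j * Q ^ e j) :
    ∀ j ∈ s, a j = b j := by
  induction s using Finset.induction_on_min_value e with
  | empty => simp
  | insert k s hk hmin ih =>
    have hQ : 0 < Q := (Nat.zero_le _).trans_lt (ha k (by simp))
    have hlt : ∀ x ∈ s, e k < e x := fun x hx =>
      (hmin x hx).lt_of_ne fun hkx => hk (he (by simp) (by simp [hx]) hkx ▸ hx)
    -- the terms indexed by `s` vanish modulo `Q ^ (e k + 1)`, exposing the lowest digit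
    have hdvd : ∀ c : ι → ℕ, Q ^ (e k + 1) ∣ ∑ x ∈ s, c x * Q ^ e x := fun c =>
      dvd_sum fun x hx => (pow_dvd_pow Q (hlt x hx)).mul_left (c x)
    have hlow : ∀ c : ι → ℕ, c k < Q →
        (∑ x ∈ insert k s, c x * Q ^ e x) % Q ^ (e k + 1) = c k * Q ^ e k := fun c hc => by
      obtain ⟨t, ht⟩ := hdvd c
      rw [sum_insert hk, ht, Nat.add_mul_mod_self_left, Nat.mod_eq_of_lt]
      rw [pow_succ']
      exact Nat.mul_lt_mul_of_pos_right hc (pow_pos hQ _)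
    have hk' : a k = b k := by
      have := hlow a (ha k (by simp))
      rw [h, hlow b (hb k (by simp))] at this
      exact (Nat.eq_of_mul_eq_mul_right (pow_pos hQ _) this).symm
    rw [sum_insert hk, sum_insert hk, hk', add_right_inj] at h
    intro j hj
    rcases mem_insert.1 hj with rfl | hj
    · exact hk'
    · exact ih (he.mono (by simp)) (fun x hx => ha x (by simp [hx]))
        (fun x hx => hb x (by simp [hx])) h j hj

namespace RCSP

variable {V S : Type} [Fintype V] [DecidableEq V] [Fintype S] [DecidableEq S] (P : RCSP V S)

def scope : V ⊕ (V × V) → Finset V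
  | Sum.inl u => {u}
  | Sum.inr e => {e.1, e.2}

theorem ew_le_m (j : V ⊕ (V × V)) (i : V × S) : P.ew j i ≤ P.m := by
  rcases j with u | e <;> obtain ⟨v, σ⟩ := i <;> simp only [ew]
  · split_ifs <;> omega
  · split_ifs with he <;> first | omega | exact P.pifst_le e he σ

theorem ew_eq_zero_of_notMem_scope {j : V ⊕ (V × V)} {i : V × S} (hi : i.1 ∉ scope j) :
    P.ew j i = 0 := by
  rcases j with u | e <;> obtain ⟨v, σ⟩ := i <;> simp only [scope] at hi
  · simp_all [ew]
  · simp only [mem_insert, mem_singleton, not_or] at hi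
    simp [ew, Ne.symm hi.1, Ne.symm hi.2]

theorem ew_inr_fst {e : V × V} (he : e ∈ P.E) (σ : S) :
    P.ew (Sum.inr e) (e.1, σ) = P.pifst e σ := by
  simp [ew, he]

theorem ew_inr_snd {e : V × V} (he : e ∈ P.E) (σ : S) :
    P.ew (Sum.inr e) (e.2, σ) = P.m - P.pisnd e σ := by
  simp [ew, he, P.ne_of_mem e he]

theorem sum_ew_eq_sum_filter_mem_scope (Sol : Finset (V × S)) (j : V ⊕ (V × V)) :
    ∑ i ∈ Sol, P.ew j i = ∑ i ∈ Sol with i.1 ∈ scope j, P.ew j i :=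
  (sum_filter_of_ne fun _ _ hi => not_not.1 (mt P.ew_eq_zero_of_notMem_scope hi)).symm

theorem sum_ew_inl (Sol : Finset (V × S)) (v : V) :
    ∑ i ∈ Sol, P.ew (Sum.inl v) i = #{i ∈ Sol | i.1 = v} * P.m := by
  rw [sum_ew_eq_sum_filter_mem_scope, card_eq_sum_ones, sum_mul, one_mul]
  refine sum_congr (by simp [scope]) fun i hi => ?_
  simp_all [ew]

theorem sum_ew_inr {e : V × V} (he : e ∈ P.E) {Sol : Finset (V × S)} {a b : S}
    (ha : {i ∈ Sol | i.1 = e.1} = {(e.1, a)}) (hb : {i ∈ Sol | i.1 = e.2} = {(e.2, b)}) :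
    ∑ i ∈ Sol, P.ew (Sum.inr e) i = P.pifst e a + (P.m - P.pisnd e b) := by
  have hpair : {i ∈ Sol | i.1 ∈ scope (Sum.inr e)} = {(e.1, a), (e.2, b)} := by
    simp only [scope, mem_insert, mem_singleton, filter_or, ha, hb]
    rfl
  rw [sum_ew_eq_sum_filter_mem_scope, hpair, sum_pair (by simp [P.ne_of_mem e he]),
    P.ew_inr_fst he, P.ew_inr_snd he]

theorem mem_Dblock_idx {r : ℕ} (idx : V ⊕ (V × V) → Fin r) {j : V ⊕ (V × V)}
    (hj : j ∈ P.Dset) : j ∈ P.Dblock idx (idx j) :=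
  mem_filter.2 ⟨hj, rfl⟩

theorem card_filter_mem_scope_le_J {r : ℕ} (idx : V ⊕ (V × V) → Fin r) (ℓ : Fin r)
    (v : V) : #{j ∈ P.Dblock idx ℓ | v ∈ scope j} ≤ P.J idx ℓ v := by
  have hsub : {j ∈ P.Dblock idx ℓ | v ∈ scope j} ⊆
      ({e ∈ P.adj v | idx (Sum.inr e) = ℓ}.image Sum.inr) ∪
        (if idx (Sum.inl v) = ℓ then {Sum.inl v} else ∅) := by
    rintro (u | e) hj <;> obtain ⟨hjD, hvj⟩ := mem_filter.1 hj
    · obtain rfl : v = u := mem_singleton.1 hvj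
      simp_all [Dblock]
    · simp_all [Dblock, Dset, scope, adj, eq_comm]
  calc #{j ∈ P.Dblock idx ℓ | v ∈ scope j}
      ≤ #({e ∈ P.adj v | idx (Sum.inr e) = ℓ}.image Sum.inr) +
          #(if idx (Sum.inl v) = ℓ then {Sum.inl v} else (∅ : Finset (V ⊕ (V × V)))) :=
        (card_le_card hsub).trans (card_union_le _ _)
    _ = P.J idx ℓ v := by
      rw [J, card_image_of_injective _ Sum.inr_injective]
      split_ifs <;> rfl

theorem card_Dblock_le_N {r : ℕ} (idx : V ⊕ (V × V) → Fin r) (ℓ : Fin r) :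
    #(P.Dblock idx ℓ) ≤ P.N idx ℓ := by
  have hdouble := sum_card_bipartiteAbove_eq_sum_card_bipartiteBelow
    (s := univ) (t := P.Dblock idx ℓ) (r := fun v j => v ∈ scope j)
  calc #(P.Dblock idx ℓ) = ∑ _j ∈ P.Dblock idx ℓ, 1 := card_eq_sum_ones _
    _ ≤ ∑ j ∈ P.Dblock idx ℓ, #{v ∈ univ | v ∈ scope j} := by
        refine sum_le_sum fun j _ => ?_
        rw [filter_mem_eq_inter, univ_inter, Nat.one_le_iff_ne_zero, card_ne_zero]
        rcases j with u | e <;> simp [scope]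
    _ = ∑ v, #{j ∈ P.Dblock idx ℓ | v ∈ scope j} := hdouble.symm
    _ ≤ P.N idx ℓ := sum_le_sum fun v _ => P.card_filter_mem_scope_le_J idx ℓ v

theorem card_mul_card_mul_m_lt_Q [Nonempty V] [Nonempty S] {F : ℕ} (hF : 0 < F) :
    Fintype.card V * Fintype.card S * P.m < P.Q F := by
  have hpos : 0 < Fintype.card V * Fintype.card S * P.m :=
    Nat.mul_pos (Nat.mul_pos Fintype.card_pos Fintype.card_pos) P.m_pos
  have h3 : 3 ≤ 3 * F ^ 2 := Nat.le_mul_of_pos_right 3 (pow_pos hF 2)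
  calc Fintype.card V * Fintype.card S * P.m
      < 3 * F ^ 2 * (Fintype.card V * Fintype.card S * P.m) := by nlinarith
    _ = P.Q F := by unfold Q; ring

theorem m_lt_Q [Nonempty V] [Nonempty S] {F : ℕ} (hF : 0 < F) : P.m < P.Q F :=
  lt_of_le_of_lt (Nat.le_mul_of_pos_left _ (Nat.mul_pos Fintype.card_pos Fintype.card_pos))
    (P.card_mul_card_mul_m_lt_Q hF)

theorem sum_ew_lt_Q [Nonempty V] [Nonempty S] {F : ℕ} (hF : 0 < F) (Sol : Finset (V × S))
    (j : V ⊕ (V × V)) : ∑ i ∈ Sol, P.ew j i < P.Q F :=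
  calc ∑ i ∈ Sol, P.ew j i ≤ #Sol * P.m := by
        simpa using sum_le_sum fun i (_ : i ∈ Sol) => P.ew_le_m j i
    _ ≤ Fintype.card V * Fintype.card S * P.m := by
        gcongr; simpa using card_le_univ Sol
    _ < P.Q F := P.card_mul_card_mul_m_lt_Q hF

theorem m_mul_Q_pow_le_Mbig [Nonempty V] [Nonempty S] {F t : ℕ} (hF : 0 < F) (ht : t ≤ F) :
    P.m * P.Q F ^ t ≤ P.Mbig F := by
  have hQ : 0 < P.Q F := (Nat.zero_le _).trans_lt (P.m_lt_Q hF)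
  calc P.m * P.Q F ^ t ≤ P.Q F ^ F * P.Q F ^ F := by
        gcongr
        exact (P.m_lt_Q hF).le.trans (Nat.le_self_pow hF.ne' _)
    _ = P.Mbig F := by rw [Mbig, two_mul, pow_add]

section Embedding

variable {P} {F r : ℕ} {idx : V ⊕ (V × V) → Fin r} {ord : V ⊕ (V × V) → ℕ}

theorem EmbedSetting.nonempty (hset : P.EmbedSetting F idx ord) : Nonempty V :=
  Fintype.card_pos_iff.1 (hset.2.1.trans hset.2.2.1)

theorem EmbedSetting.pos (hset : P.EmbedSetting F idx ord) : 0 < F := hset.2.1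

theorem EmbedSetting.injOn_ord (hset : P.EmbedSetting F idx ord) (ℓ : Fin r) :
    Set.InjOn ord (P.Dblock idx ℓ) :=
  (hset.2.2.2.2 ℓ).injOn

theorem EmbedSetting.ord_le (hset : P.EmbedSetting F idx ord) {ℓ : Fin r}
    {j : V ⊕ (V × V)} (hj : j ∈ P.Dblock idx ℓ) : ord j ≤ F :=
  ((hset.2.2.2.2 ℓ).mapsTo hj).2.trans (hset.2.2.2.1 ℓ)

theorem cost1_le_Mbig_mul_J [Nonempty S] (hset : P.EmbedSetting F idx ord) (ℓ : Fin r)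
    (i : V × S) : P.cost1 F idx ord ℓ i ≤ P.Mbig F * P.J idx ℓ i.1 := by
  have := hset.nonempty
  calc P.cost1 F idx ord ℓ i
      = ∑ j ∈ P.Dblock idx ℓ with i.1 ∈ scope j, P.ew j i * P.Q F ^ ord j := by
        refine (sum_filter_of_ne fun j _ hj => ?_).symm
        by_contra hij
        exact hj (by rw [P.ew_eq_zero_of_notMem_scope hij, zero_mul])
    _ ≤ #{j ∈ P.Dblock idx ℓ | i.1 ∈ scope j} • P.Mbig F := by
        refine sum_le_card_nsmul _ _ _ fun j hj => ?_
        calc P.ew j i * P.Q F ^ ord j ≤ P.m * P.Q F ^ ord j := by gcongr; exact P.ew_le_m j i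
          _ ≤ P.Mbig F := P.m_mul_Q_pow_le_Mbig hset.pos (hset.ord_le (mem_filter.1 hj).1)
    _ ≤ P.Mbig F * P.J idx ℓ i.1 := by
        rw [smul_eq_mul, mul_comm]
        exact Nat.mul_le_mul_left _ (P.card_filter_mem_scope_le_J idx ℓ i.1)

theorem budget1_le_Mbig_mul_N [Nonempty S] (hset : P.EmbedSetting F idx ord) (ℓ : Fin r) :
    P.budget1 F idx ord ℓ ≤ P.Mbig F * P.N idx ℓ := by
  have := hset.nonempty
  calc P.budget1 F idx ord ℓ ≤ #(P.Dblock idx ℓ) • P.Mbig F :=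
        sum_le_card_nsmul _ _ _ fun j hj => P.m_mul_Q_pow_le_Mbig hset.pos (hset.ord_le hj)
    _ ≤ P.Mbig F * P.N idx ℓ := by
        rw [smul_eq_mul, mul_comm]
        exact Nat.mul_le_mul_left _ (P.card_Dblock_le_N idx ℓ)

theorem sum_cost1_eq_budget1 [Nonempty S] (hset : P.EmbedSetting F idx ord)
    {Sol : Finset (V × S)} (hSol : P.IsEmbedSolution F idx ord Sol) {ℓ : Fin r}
    (ht : P.Tight idx Sol ℓ) :
    ∑ i ∈ Sol, P.cost1 F idx ord ℓ i = P.budget1 F idx ord ℓ := by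
  have htotal : ∑ i ∈ Sol, P.cost2 F idx ord ℓ i + ∑ i ∈ Sol, P.cost1 F idx ord ℓ i
      = P.Mbig F * P.N idx ℓ := by
    rw [← sum_add_distrib, ← ht, mul_sum]
    exact sum_congr rfl fun i _ => Nat.sub_add_cancel (cost1_le_Mbig_mul_J hset ℓ i)
  have hb1 := hSol.1 ℓ
  have hb2 := hSol.2 ℓ
  have hB := budget1_le_Mbig_mul_N hset ℓ
  rw [budget2] at hb2
  omega

theorem sum_ew_eq_m [Nonempty S] (hset : P.EmbedSetting F idx ord)
    {Sol : Finset (V × S)} (hSol : P.IsEmbedSolution F idx ord Sol) {ℓ : Fin r}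
    (ht : P.Tight idx Sol ℓ) {j : V ⊕ (V × V)} (hj : j ∈ P.Dblock idx ℓ) :
    ∑ i ∈ Sol, P.ew j i = P.m := by
  have := hset.nonempty
  have hdigits : ∑ j ∈ P.Dblock idx ℓ, (∑ i ∈ Sol, P.ew j i) * P.Q F ^ ord j
      = ∑ j ∈ P.Dblock idx ℓ, P.m * P.Q F ^ ord j := by
    rw [← budget1, ← sum_cost1_eq_budget1 hset hSol ht]
    simp only [cost1, sum_mul]
    exact sum_comm
  exact Nat.eq_of_sum_mul_pow_eq (hset.injOn_ord ℓ)
    (fun j _ => P.sum_ew_lt_Q hset.pos Sol j) (fun _ _ => P.m_lt_Q hset.pos) hdigits j hj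

theorem filter_fst_eq_singleton [Nonempty S] (hset : P.EmbedSetting F idx ord)
    {Sol : Finset (V × S)} (hSol : P.IsEmbedSolution F idx ord Sol) {v : V} {σ : S}
    (hv : P.InVstar idx Sol v) (hvσ : (v, σ) ∈ Sol) : {i ∈ Sol | i.1 = v} = {(v, σ)} := by
  have hm := sum_ew_eq_m hset hSol hv.1 (P.mem_Dblock_idx idx (by simp [Dset]))
  rw [sum_ew_inl] at hm
  have hcard : #{i ∈ Sol | i.1 = v} = 1 :=
    Nat.eq_of_mul_eq_mul_right P.m_pos (hm.trans (one_mul _).symm)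
  have hsub : {(v, σ)} ⊆ {i ∈ Sol | i.1 = v} :=
    singleton_subset_iff.2 (mem_filter.2 ⟨hvσ, rfl⟩)
  exact (eq_of_subset_of_card_le hsub (by rw [hcard, card_singleton])).symm

end Embedding

end RCSP

theorem embed_assignment_consistent_general
    {V S : Type} [Fintype V] [DecidableEq V] [Fintype S] [DecidableEq S]
    (P : RCSP V S) (F : ℕ) {r : ℕ} (idx : V ⊕ (V × V) → Fin r)
    (ord : V ⊕ (V × V) → ℕ) (hset : P.EmbedSetting F idx ord)
    (Sol : Finset (V × S)) (hSol : P.IsEmbedSolution F idx ord Sol)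
    (φ : V → Option S)
    (hφ₁ : ∀ (v : V) (σ : S), φ v = some σ → P.InVstar idx Sol v ∧ (v, σ) ∈ Sol) :
    P.Consistent φ := by
  intro e he a b hea heb
  have : Nonempty S := ⟨a⟩
  obtain ⟨hVa, hSa⟩ := hφ₁ e.1 a hea
  obtain ⟨hVb, hSb⟩ := hφ₁ e.2 b heb
  have hedge := RCSP.sum_ew_eq_m hset hSol (hVa.2 e (by simp [RCSP.adj, he]))
    (P.mem_Dblock_idx idx (by simp [RCSP.Dset, he]))
  rw [P.sum_ew_inr he (RCSP.filter_fst_eq_singleton hset hSol hVa hSa)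
    (RCSP.filter_fst_eq_singleton hset hSol hVb hSb)] at hedge
  have := P.pisnd_le e he b
  omega

/-- In the setting of the dimension embedding reduction, let `Sol` be a
solution of `I(Π,F)` and let `V*` be as in Statement 8.  The partial assignment `φ`
defined by `φ v = σ_v` (the unique symbol with `(v, σ_v) ∈ Sol`) for `v ∈ V*` and
`φ v = ⊥` otherwise, is a consistent partial assignment for `Π`.  (The assignment `φ`
is characterized by: assigned values come from `Sol` and assigned vertices lie in `V*`,
and every vertex of `V*` is assigned.) -/
theorem embed_assignment_consistent
    {V S : Type} [Fintype V] [DecidableEq V] [Fintype S] [DecidableEq S]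
    (P : RCSP V S) (F : ℕ) {r : ℕ} (idx : V ⊕ (V × V) → Fin r)
    (ord : V ⊕ (V × V) → ℕ) (hset : P.EmbedSetting F idx ord)
    (Sol : Finset (V × S)) (hSol : P.IsEmbedSolution F idx ord Sol)
    (φ : V → Option S)
    (hφ₁ : ∀ (v : V) (σ : S), φ v = some σ → P.InVstar idx Sol v ∧ (v, σ) ∈ Sol)
    (hφ₂ : ∀ v : V, P.InVstar idx Sol v → (φ v).isSome) :
    P.Consistent φ :=
  embed_assignment_consistent_general P F idx ord hset Sol hSol φ hφ₁
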